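/- There is an absolute constant C > 0 with the following property. Let G be an abelian group, A ⊆ G a finite set with dim(A) ≥ 4, k = ⌈dim(A)·log dim(A)⌉, Λ_k a maximal k-dissociated subset of A (so |Λ_k| = dim_k(A)), and K ≥ 1 a real number. Then: (i) if dim(Q(Λ_k)) ≤ K·dim(A), then dim_k(A) ≤ C·K·dim(A)/log dim(A); and (ii) if dim_k(A) ≤ K·dim(A)/log dim(A), then dim(Q(Λ_k)) ≤ C·K·dim(A). -/

import Mathlib

open Finset Pointwise

universe u

/-- A finset `Λ` in an abelian group is `k`-dissociated if every integer relation
`∑ ε_λ • λ = 0` with `|ε_λ| ≤ k` forces all `ε_λ = 0`. -/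
def IsKDissociated {G : Type*} [AddCommGroup G] (k : ℕ) (Λ : Finset G) : Prop :=
  ∀ ε : G → ℤ, (∀ x ∈ Λ, |ε x| ≤ (k : ℤ)) → (∑ x ∈ Λ, ε x • x) = 0 → ∀ x ∈ Λ, ε x = 0

/-- `addDim k A` is the maximal size of a `k`-dissociated subset of `A`. -/
noncomputable def addDim {G : Type*} [AddCommGroup G] (k : ℕ) (A : Finset G) : ℕ :=
  sSup {n : ℕ | ∃ Λ : Finset G, Λ ⊆ A ∧ Λ.card = n ∧ IsKDissociated k Λ}

/-- `nFold A n` is the `n`-fold sumset `A + A + ⋯ + A` (`n` summands). -/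
def nFold {G : Type*} [AddCommGroup G] [DecidableEq G] (A : Finset G) : ℕ → Finset G
  | 0 => {0}
  | n + 1 => nFold A n + A

/-- The combinatorial cube `Q(Λ) = {∑_{x ∈ S} x : S ⊆ Λ}`, i.e. all `{0,1}`-combinations. -/
def cube {G : Type*} [AddCommGroup G] [DecidableEq G] (Λ : Finset G) : Finset G :=
  Λ.powerset.image (fun S => ∑ x ∈ S, x)

/-!
Write `m = |Λ_k|` and `d = dim Q(Λ_k)`. Both parts follow from `d ≍ m log m` together with
`log m ≤ log n` (where `n = dim A ≥ m`) and, when `n < m²`, `log n ≤ 2 log m`; the remaining range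
`m ≲ √n` of part (i) is trivial.

Upper bound: a dissociated `D ⊆ Q(Λ)` has `2^|D|` distinct subset sums, each of the form
`∑ c_λ λ` with `0 ≤ c_λ ≤ |D|`, so `2^d ≤ (d + 1)^m` and hence `d ≤ 2m (log m + 1)`.

Lower bound: by a union bound over the nonzero `ε ∈ {-1, 0, 1}^N`, using that `ε` with support of
size `s` sums to zero on a random column with probability at most `C(s, s/2) / 2^s ≲ 1/√s`, there
are `N ≍ m log m` vectors in `{0, 1}^m` without a nontrivial `{-1, 0, 1}`-relation. Any such
relation between their images `∑ v_λ λ ∈ Q(Λ_k)` is a relation on `Λ_k` with coefficients bounded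
by `N ≤ k`, hence trivial; so the images form a dissociated subset of `Q(Λ_k)` of size `N`.
-/

open scoped symmDiff

section Dissociated

variable {G : Type*} [AddCommGroup G]

theorem IsKDissociated.mono {j k : ℕ} (hjk : j ≤ k) {Λ : Finset G} (h : IsKDissociated k Λ) :
    IsKDissociated j Λ :=
  fun ε hε ↦ h ε fun x hx ↦ (hε x hx).trans (by exact_mod_cast hjk)

theorem isKDissociated_empty (k : ℕ) : IsKDissociated k (∅ : Finset G) :=
  fun _ _ _ x hx ↦ absurd hx (notMem_empty x)

theorem bddAbove_addDim_set (k : ℕ) (A : Finset G) :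
    BddAbove {n : ℕ | ∃ Λ : Finset G, Λ ⊆ A ∧ Λ.card = n ∧ IsKDissociated k Λ} := by
  refine ⟨A.card, ?_⟩
  rintro n ⟨Λ, hΛA, rfl, -⟩
  exact card_le_card hΛA

theorem le_addDim {k : ℕ} {Λ A : Finset G} (hΛA : Λ ⊆ A) (hΛ : IsKDissociated k Λ) :
    Λ.card ≤ addDim k A :=
  le_csSup (bddAbove_addDim_set k A) ⟨Λ, hΛA, rfl, hΛ⟩

theorem exists_isKDissociated_card_eq_addDim (k : ℕ) (A : Finset G) :
    ∃ Λ ⊆ A, Λ.card = addDim k A ∧ IsKDissociated k Λ :=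
  Nat.sSup_mem (s := {n | ∃ Λ : Finset G, Λ ⊆ A ∧ Λ.card = n ∧ IsKDissociated k Λ})
    ⟨0, ∅, empty_subset A, card_empty, isKDissociated_empty k⟩ (bddAbove_addDim_set k A)

theorem IsKDissociated.eq_zero_of_sum_smul_eq_zero {k : ℕ} {Λ : Finset G}
    (hΛ : IsKDissociated k Λ) {w : Λ → ℤ} (hw : ∀ x, |w x| ≤ k)
    (hsum : ∑ x, w x • (x : G) = 0) : w = 0 := by
  classical
  set ε : G → ℤ := fun x ↦ if hx : x ∈ Λ then w ⟨x, hx⟩ else 0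
  have hεw : ∀ x : Λ, ε x = w x := fun x ↦ dif_pos x.2
  have hε := hΛ ε (fun x hx ↦ by simpa [ε, hx] using hw ⟨x, hx⟩) <| by
    rw [← sum_coe_sort Λ]
    simpa only [hεw] using hsum
  funext x
  rw [← hεw]
  exact hε x x.2

def IsDissociatedFamily {ι : Type*} [Fintype ι] (v : ι → G) : Prop :=
  ∀ ε : ι → ℤ, (∀ i, |ε i| ≤ 1) → ∑ i, ε i • v i = 0 → ε = 0

namespace IsDissociatedFamily

variable {ι : Type*} [Fintype ι] {v : ι → G}

theorem injective (hv : IsDissociatedFamily v) : Function.Injective v := by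
  classical
  intro i j hij
  by_contra hne
  have h := congrFun (hv (Pi.single i 1 - Pi.single j 1) (fun l ↦ ?_) ?_) i
  · simp [hne] at h
  · by_cases hi : l = i <;> by_cases hj : l = j <;> simp [hi, hj, hne, Ne.symm hne]
  · simp [sub_smul, Pi.single_apply, hij]

theorem isKDissociated_image [DecidableEq G] (hv : IsDissociatedFamily v) :
    IsKDissociated 1 (univ.image v) := by
  intro ε hε hsum
  rw [sum_image fun i _ j _ h ↦ hv.injective h] at hsum
  have := hv (ε ∘ v) (fun i ↦ mod_cast hε _ (mem_image_of_mem v (mem_univ i))) hsum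
  simp only [mem_image, mem_univ, true_and, forall_exists_index, forall_apply_eq_imp_iff]
  exact fun i ↦ congrFun this i

theorem card_le_addDim [DecidableEq G] (hv : IsDissociatedFamily v) {A : Finset G}
    (hvA : ∀ i, v i ∈ A) : Fintype.card ι ≤ addDim 1 A := by
  have h := le_addDim (A := A) (fun x hx ↦ ?_) hv.isKDissociated_image
  · rwa [card_image_of_injective _ hv.injective, card_univ] at h
  · obtain ⟨i, -, rfl⟩ := mem_image.mp hx
    exact hvA i

end IsDissociatedFamily

end Dissociated

section Cube

variable {G : Type*} [AddCommGroup G] [DecidableEq G]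

theorem mem_cube_iff {Λ : Finset G} {a : G} :
    a ∈ cube Λ ↔ ∃ T : Finset Λ, ∑ x ∈ T, (x : G) = a := by
  constructor
  · intro h
    obtain ⟨S, hS, rfl⟩ := mem_image.mp h
    exact ⟨S.subtype (· ∈ Λ), sum_subtype_of_mem (fun x ↦ x) fun x hx ↦ mem_powerset.mp hS hx⟩
  · rintro ⟨T, rfl⟩
    refine mem_image.mpr ⟨T.map (Function.Embedding.subtype _), mem_powerset.mpr fun x hx ↦ ?_,
      sum_map _ _ _⟩
    obtain ⟨y, -, rfl⟩ := mem_map.mp hx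
    exact y.2

theorem sum_subtype_eq_sum_boole_smul {Λ : Finset G} (T : Finset Λ) :
    ∑ x ∈ T, (x : G) = ∑ x, (if x ∈ T then 1 else 0 : ℕ) • (x : G) := by
  simp only [ite_smul, one_smul, zero_smul, Fintype.sum_ite_mem]

theorem sum_smul_mem_cube {Λ : Finset G} {b : Λ → ℤ} (hb : ∀ x, b x = 0 ∨ b x = 1) :
    ∑ x, b x • (x : G) ∈ cube Λ := by
  refine mem_cube_iff.mpr ⟨univ.filter (b · = 1), ?_⟩
  rw [sum_filter]
  refine sum_congr rfl fun x _ ↦ ?_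
  rcases hb x with h | h <;> simp [h]

theorem exists_sum_eq_sum_nsmul_of_subset_cube {Λ S : Finset G} (hS : S ⊆ cube Λ) :
    ∃ c : Λ → ℕ, (∀ x, c x ≤ S.card) ∧ ∑ a ∈ S, a = ∑ x, c x • (x : G) := by
  induction S using Finset.induction_on with
  | empty => exact ⟨0, by simp, by simp⟩
  | insert a S ha ih =>
    obtain ⟨c, hc, hsum⟩ := ih ((subset_insert a S).trans hS)
    obtain ⟨T, rfl⟩ := mem_cube_iff.mp (hS (mem_insert_self _ S))
    refine ⟨fun x ↦ (if x ∈ T then 1 else 0) + c x, fun x ↦ ?_, ?_⟩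
    · rw [card_insert_of_notMem ha]
      dsimp only
      split_ifs <;> linarith [hc x]
    · rw [sum_insert ha, hsum, sum_subtype_eq_sum_boole_smul, ← sum_add_distrib]
      simp only [add_smul]

theorem IsKDissociated.injOn_sum_powerset {D : Finset G} (hD : IsKDissociated 1 D) :
    Set.InjOn (fun S ↦ ∑ x ∈ S, x) (D.powerset : Set (Finset G)) := by
  intro S hS T hT hST
  have hsum : ∀ U ⊆ D, ∑ x ∈ D, (if x ∈ U then 1 else 0 : ℤ) • x = ∑ x ∈ U, x :=
    fun U hU ↦ by simp [ite_smul, sum_ite_mem, inter_eq_right.mpr hU]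
  have h := hD (fun x ↦ (if x ∈ S then 1 else 0) - (if x ∈ T then 1 else 0))
    (fun x _ ↦ by split_ifs <;> simp) <| by
      simp only [sub_smul, sum_sub_distrib, hsum S (mem_powerset.mp hS),
        hsum T (mem_powerset.mp hT)]
      exact sub_eq_zero.mpr hST
  ext x
  by_cases hx : x ∈ D
  · have := h x hx
    split_ifs at this <;> simp_all
  · exact iff_of_false (fun h ↦ hx (mem_powerset.mp hS h)) (fun h ↦ hx (mem_powerset.mp hT h))

theorem two_pow_card_le_of_subset_cube {Λ D : Finset G} (hD : D ⊆ cube Λ)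
    (hdis : IsKDissociated 1 D) : 2 ^ D.card ≤ (D.card + 1) ^ Λ.card := by
  have hmaps : ∀ S ∈ D.powerset, ∑ x ∈ S, x ∈ (Fintype.piFinset fun _ : Λ ↦ range (D.card + 1)).image
      fun c : Λ → ℕ ↦ ∑ x, c x • (x : G) := by
    intro S hS
    have hSD := mem_powerset.mp hS
    obtain ⟨c, hc, hsum⟩ := exists_sum_eq_sum_nsmul_of_subset_cube (hSD.trans hD)
    refine mem_image.mpr ⟨c, Fintype.mem_piFinset.mpr fun x ↦ ?_, hsum.symm⟩
    exact mem_range_succ_iff.mpr ((hc x).trans (card_le_card hSD))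
  calc 2 ^ D.card = D.powerset.card := (card_powerset D).symm
    _ ≤ _ := card_le_card_of_injOn _ hmaps hdis.injOn_sum_powerset
    _ ≤ (Fintype.piFinset fun _ : Λ ↦ range (D.card + 1)).card := card_image_le
    _ = (D.card + 1) ^ Λ.card := by simp

theorem addDim_cube_le_two_pow (Λ : Finset G) : addDim 1 (cube Λ) ≤ 2 ^ Λ.card := by
  obtain ⟨D, hD, hcard, -⟩ := exists_isKDissociated_card_eq_addDim 1 (cube Λ)
  calc addDim 1 (cube Λ) = D.card := hcard.symm
    _ ≤ Λ.powerset.card := (card_le_card hD).trans card_image_le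
    _ = 2 ^ Λ.card := card_powerset Λ

end Cube

theorem IsKDissociated.card_le_addDim_cube {G : Type*} [AddCommGroup G] [DecidableEq G]
    {k : ℕ} {Λ : Finset G} (hΛ : IsKDissociated k Λ) {ι : Type*} [Fintype ι]
    {v : ι → Λ → ℤ} (hv01 : ∀ i x, v i x = 0 ∨ v i x = 1) (hv : IsDissociatedFamily v)
    (hιk : Fintype.card ι ≤ k) : Fintype.card ι ≤ addDim 1 (cube Λ) := by
  refine IsDissociatedFamily.card_le_addDim (v := fun i ↦ ∑ x, v i x • (x : G))
    (fun ε hε hsum ↦ hv ε hε (hΛ.eq_zero_of_sum_smul_eq_zero (fun x ↦ ?_) ?_))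
    fun i ↦ sum_smul_mem_cube (hv01 i)
  · have hterm : ∀ i, |ε i * v i x| ≤ 1 := fun i ↦ by
      rw [abs_mul]
      rcases hv01 i x with h | h <;> simp [h, hε i]
    calc |(∑ i, ε i • v i) x| = |∑ i, ε i * v i x| := by simp
      _ ≤ ∑ i, |ε i * v i x| := abs_sum_le_sum_abs _ _
      _ ≤ ∑ _i : ι, 1 := sum_le_sum fun i _ ↦ hterm i
      _ ≤ k := by simpa using hιk
  · rw [← hsum]
    simp only [Finset.sum_apply, Pi.smul_apply, smul_eq_mul, sum_smul, smul_sum, mul_smul]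
    exact sum_comm

theorem Real.logb_self_pow {b : ℝ} (hb : 1 < b) (n : ℕ) : Real.logb b (b ^ n) = n := by
  rw [Real.logb_pow, Real.logb_self_eq_one hb, mul_one]

theorem le_two_mul_mul_logb_add_one {d m : ℕ} (h : 2 ^ d ≤ (d + 1) ^ m) (hd : d ≤ 2 ^ m) :
    (d : ℝ) ≤ 2 * m * (Real.logb 2 m + 1) := by
  have hd_le : (d : ℝ) ≤ m * Real.logb 2 (d + 1) :=
    calc (d : ℝ) = Real.logb 2 (2 ^ d) := (Real.logb_self_pow one_lt_two d).symm
      _ ≤ Real.logb 2 ((d + 1) ^ m) :=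
          Real.logb_le_logb_of_le one_lt_two (by positivity) (by exact_mod_cast h)
      _ = m * Real.logb 2 (d + 1) := Real.logb_pow _ _ _
  obtain rfl | hm := m.eq_zero_or_pos
  · simpa using hd_le
  have hlog_le : Real.logb 2 (d + 1) ≤ m + 1 := by
    have : d + 1 ≤ 2 ^ (m + 1) := by rw [pow_succ]; linarith [Nat.one_le_two_pow (n := m)]
    calc Real.logb 2 (d + 1) ≤ Real.logb 2 (2 ^ (m + 1)) :=
          Real.logb_le_logb_of_le one_lt_two (by positivity) (by exact_mod_cast this)
      _ = m + 1 := by rw [Real.logb_self_pow one_lt_two]; push_cast; ring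
  have hd_sq : d + 1 ≤ 4 * m ^ 2 := by
    have : (d : ℝ) ≤ m * (m + 1) := hd_le.trans (by gcongr)
    have : d ≤ m * (m + 1) := by exact_mod_cast this
    nlinarith
  have hlog_sq : Real.logb 2 (d + 1) ≤ 2 + 2 * Real.logb 2 m := by
    calc Real.logb 2 (d + 1) ≤ Real.logb 2 (2 ^ 2 * m ^ 2) :=
          Real.logb_le_logb_of_le one_lt_two (by positivity) (by exact_mod_cast hd_sq)
      _ = 2 + 2 * Real.logb 2 m := by
          rw [Real.logb_mul (by positivity) (by positivity), Real.logb_self_pow one_lt_two,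
            Real.logb_pow]
          push_cast; ring
  calc (d : ℝ) ≤ m * Real.logb 2 (d + 1) := hd_le
    _ ≤ m * (2 + 2 * Real.logb 2 m) := by gcongr
    _ = 2 * m * (Real.logb 2 m + 1) := by ring

theorem addDim_cube_le {G : Type*} [AddCommGroup G] [DecidableEq G] (Λ : Finset G) :
    (addDim 1 (cube Λ) : ℝ) ≤ 2 * Λ.card * (Real.logb 2 Λ.card + 1) := by
  obtain ⟨D, hD, hcard, hdis⟩ := exists_isKDissociated_card_eq_addDim 1 (cube Λ)
  have h := two_pow_card_le_of_subset_cube hD hdis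
  rw [hcard] at h
  exact le_two_mul_mul_logb_add_one h (addDim_cube_le_two_pow Λ)

section Counting

variable {α : Type*} [DecidableEq α]

def signedIndicator (S P : Finset α) (i : α) : ℤ :=
  if i ∈ P then -1 else if i ∈ S then 1 else 0

theorem eq_signedIndicator_of_abs_le_one [Fintype α] {ε : α → ℤ} (hε : ∀ i, |ε i| ≤ 1) :
    ε = signedIndicator (univ.filter (ε · ≠ 0)) (univ.filter (ε · = -1)) := by
  funext i
  have : ε i = -1 ∨ ε i = 0 ∨ ε i = 1 := by have := abs_le.mp (hε i); omega
  rcases this with h | h | h <;> simp [signedIndicator, h]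

theorem card_symmDiff_inter_eq_sum_signedIndicator_add [Fintype α] {S P : Finset α} (hPS : P ⊆ S)
    (T : Finset α) :
    (((T ∆ P) ∩ S).card : ℤ) = ∑ i ∈ T, signedIndicator S P i + P.card := by
  have hcard : ∀ X : Finset α, (X.card : ℤ) = ∑ i, if i ∈ X then 1 else 0 := by simp
  rw [hcard, hcard, ← Fintype.sum_ite_mem T, ← sum_add_distrib]
  refine sum_congr rfl fun i _ ↦ ?_
  have := @hPS i
  unfold signedIndicator
  by_cases hT : i ∈ T <;> by_cases hP : i ∈ P <;> by_cases hS : i ∈ S <;>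
    simp_all [mem_symmDiff]

theorem card_filter_sum_signedIndicator_eq_zero_le [Fintype α] {S P : Finset α} (hPS : P ⊆ S) :
    (univ.filter fun T : Finset α ↦ ∑ i ∈ T, signedIndicator S P i = 0).card ≤
      S.card.choose (S.card / 2) * 2 ^ (Fintype.card α - S.card) := by
  -- `T ↦ T ∆ P` turns the zero-sum condition into `#((T ∆ P) ∩ S) = #P`.
  calc _ ≤ (S.powersetCard P.card ×ˢ Sᶜ.powerset).card := by
        refine card_le_card_of_injOn (fun T ↦ ((T ∆ P) ∩ S, T \ S)) (fun T hT ↦ ?_) ?_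
        · have hsum := (mem_filter.mp hT).2
          have hcard := card_symmDiff_inter_eq_sum_signedIndicator_add hPS T
          rw [hsum, zero_add, Nat.cast_inj] at hcard
          simp [mem_powersetCard, hcard, subset_iff, sdiff_eq_inter_compl]
        · intro T₁ _ T₂ _ h
          simp only [Prod.mk.injEq, Finset.ext_iff, mem_inter, mem_symmDiff, mem_sdiff] at h
          ext i
          have h₁ := h.1 i
          have h₂ := h.2 i
          by_cases hS : i ∈ S <;> by_cases hP : i ∈ P <;> simp only [hS, hP] at h₁ h₂ <;> tauto
    _ = S.card.choose P.card * 2 ^ (Fintype.card α - S.card) := by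
        rw [card_product, card_powersetCard, card_powerset, card_compl]
    _ ≤ _ := Nat.mul_le_mul_right _ (Nat.choose_le_middle _ _)

/-- The families `ω` on which some nonzero `{-1, 0, 1}`-vector, written `signedIndicator S P` with
`S` its support, sums to zero over every `ω j`. -/
def zeroSumFamilies (N : ℕ) (ι : Type*) [Fintype ι] [DecidableEq ι] :
    Finset (ι → Finset (Fin N)) :=
  (Icc 1 N).biUnion fun s ↦ (powersetCard s univ).biUnion fun S ↦ S.powerset.biUnion fun P ↦
    Fintype.piFinset fun _ ↦ univ.filter fun T ↦ ∑ i ∈ T, signedIndicator S P i = 0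

theorem mem_zeroSumFamilies {ι : Type*} [Fintype ι] [DecidableEq ι] {N : ℕ}
    {ω : ι → Finset (Fin N)} {ε : Fin N → ℤ} (hε : ∀ i, |ε i| ≤ 1) (hne : ε ≠ 0) (hω : ∀ j, ∑ i ∈ ω j, ε i = 0) :
    ω ∈ zeroSumFamilies N ι := by
  set S := univ.filter (ε · ≠ 0)
  set P := univ.filter (ε · = -1)
  have hS : S.card ∈ Icc 1 N := by
    obtain ⟨i, hi⟩ := Function.ne_iff.mp hne
    exact mem_Icc.mpr ⟨card_pos.mpr ⟨i, by simpa [S] using hi⟩, card_le_univ S |>.trans (by simp)⟩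
  have hPS : P ⊆ S := fun i ↦ by simp +contextual [S, P]
  rw [eq_signedIndicator_of_abs_le_one hε] at hω
  exact mem_biUnion.mpr ⟨_, hS, mem_biUnion.mpr ⟨S, mem_powersetCard_univ.mpr rfl,
    mem_biUnion.mpr ⟨P, mem_powerset.mpr hPS,
      Fintype.mem_piFinset.mpr fun j ↦ mem_filter.mpr ⟨mem_univ _, hω j⟩⟩⟩⟩

theorem card_zeroSumFamilies_le (N : ℕ) (ι : Type*) [Fintype ι] [DecidableEq ι] :
    (zeroSumFamilies N ι).card ≤
      ∑ s ∈ Icc 1 N, N.choose s * 2 ^ s * (s.choose (s / 2) * 2 ^ (N - s)) ^ Fintype.card ι := by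
  refine card_biUnion_le.trans (sum_le_sum fun s _ ↦ ?_)
  calc _ ≤ ∑ S ∈ powersetCard s univ, ∑ P ∈ S.powerset,
        (s.choose (s / 2) * 2 ^ (N - s)) ^ Fintype.card ι := by
        refine card_biUnion_le.trans (sum_le_sum fun S hS ↦ ?_)
        refine card_biUnion_le.trans (sum_le_sum fun P hP ↦ ?_)
        rw [Fintype.card_piFinset, prod_const, card_univ]
        gcongr
        simpa [mem_powersetCard_univ.mp hS] using
          card_filter_sum_signedIndicator_eq_zero_le (mem_powerset.mp hP)
    _ = _ := by
        rw [sum_congr rfl fun S hS ↦ by rw [sum_const, card_powerset, mem_powersetCard_univ.mp hS],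
          sum_const, card_powersetCard, card_univ, Fintype.card_fin, smul_eq_mul, smul_eq_mul,
          mul_assoc]

variable {ι : Type*} [Fintype ι] [DecidableEq ι]

theorem exists_zero_one_isDissociatedFamily_of_sum_lt (N : ℕ)
    (hcount : ∑ s ∈ Icc 1 N, N.choose s * 2 ^ s * (s.choose (s / 2) * 2 ^ (N - s)) ^ Fintype.card ι
      < 2 ^ (N * Fintype.card ι)) :
    ∃ v : Fin N → ι → ℤ, (∀ i j, v i j = 0 ∨ v i j = 1) ∧ IsDissociatedFamily v := by
  obtain ⟨ω, hω⟩ : ∃ ω, ω ∉ zeroSumFamilies N ι := by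
    by_contra! h
    have := card_le_card fun ω (_ : ω ∈ univ) ↦ h ω
    rw [card_univ, Fintype.card_fun, Fintype.card_finset, Fintype.card_fin, ← pow_mul] at this
    exact (this.trans (card_zeroSumFamilies_le N ι)).not_gt hcount
  refine ⟨fun i j ↦ if i ∈ ω j then 1 else 0, fun i j ↦ by by_cases h : i ∈ ω j <;> simp [h],
    fun ε hε hsum ↦ by_contra fun hne ↦ hω (mem_zeroSumFamilies hε hne fun j ↦ ?_)⟩
  simpa [Fintype.sum_ite_mem] using congrFun hsum j

end Counting

theorem Nat.centralBinom_sq_mul_le (n : ℕ) : n.centralBinom ^ 2 * (2 * n + 1) ≤ 16 ^ n := by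
  induction n with
  | zero => simp
  | succ n ih =>
    have h := Nat.succ_mul_centralBinom_succ n
    refine Nat.le_of_mul_le_mul_left (c := (n + 1) ^ 2) ?_ (pow_pos n.succ_pos 2)
    calc (n + 1) ^ 2 * ((n + 1).centralBinom ^ 2 * (2 * (n + 1) + 1))
        = ((n + 1) * (n + 1).centralBinom) ^ 2 * (2 * n + 3) := by ring
      _ = n.centralBinom ^ 2 * (2 * n + 1) * (4 * (2 * n + 1) * (2 * n + 3)) := by rw [h]; ring
      _ ≤ 16 ^ n * (4 * (2 * n + 1) * (2 * n + 3)) := by gcongr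
      _ ≤ (n + 1) ^ 2 * 16 ^ (n + 1) := by
          rw [pow_succ 16 n]; nlinarith [Nat.one_le_pow n 16 (by norm_num)]

theorem Nat.choose_half_sq_mul_succ_le (s : ℕ) : s.choose (s / 2) ^ 2 * (s + 1) ≤ 4 ^ s := by
  obtain ⟨m, rfl | rfl⟩ := Nat.even_or_odd' s
  · rw [show 2 * m / 2 = m by omega, ← Nat.centralBinom_eq_two_mul_choose, pow_mul]
    exact Nat.centralBinom_sq_mul_le m
  · -- `centralBinom (m + 1) = 2 * (2m+1).choose m`, so the odd case follows from the even one.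
    have h := Nat.centralBinom_sq_mul_le (m + 1)
    rw [Nat.centralBinom_eq_two_mul_choose, show 2 * (m + 1) = 2 * m + 1 + 1 by ring,
      Nat.choose_succ_succ, Nat.choose_symm_half] at h
    rw [show (2 * m + 1) / 2 = m by omega]
    refine Nat.le_of_mul_le_mul_left (c := 4) ?_ (by norm_num)
    calc 4 * ((2 * m + 1).choose m ^ 2 * (2 * m + 1 + 1))
        ≤ ((2 * m + 1).choose m + (2 * m + 1).choose m) ^ 2 * (2 * m + 1 + 1 + 1) := by
          nlinarith
      _ ≤ 16 ^ (m + 1) := h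
      _ = 4 * 4 ^ (2 * m + 1) := by rw [pow_succ, pow_succ, pow_mul]; norm_num; ring

section Estimates

variable {m N s : ℕ}

theorem sq_two_mul_choose_mul_two_pow_le_two_pow (hsN : s ≤ N) :
    (2 * N * N.choose s * 2 ^ s) ^ 2 ≤ 2 ^ (6 * N + 2) := by
  have h2N : 2 * N ≤ 2 ^ (N + 1) := by have := @Nat.lt_two_pow_self N; rw [pow_succ]; omega
  calc (2 * N * N.choose s * 2 ^ s) ^ 2 ≤ (2 ^ (N + 1) * 2 ^ N * 2 ^ N) ^ 2 := by
        gcongr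
        · exact Nat.choose_le_two_pow N s
        · exact one_le_two
    _ = 2 ^ (6 * N + 2) := by rw [← pow_add, ← pow_add, ← pow_mul]; ring_nf

theorem sq_two_mul_choose_mul_two_pow_le_pow (hs : 1 ≤ s) :
    (2 * N * N.choose s * 2 ^ s) ^ 2 ≤ (2 * N) ^ (4 * s) := by
  rcases N.eq_zero_or_pos with rfl | hN
  · simp
  calc (2 * N * N.choose s * 2 ^ s) ^ 2 ≤ (2 * N * N ^ s * 2 ^ s) ^ 2 := by
        gcongr; exact Nat.choose_le_pow N s
    _ = (2 * N) ^ (2 * s + 2) := by ring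
    _ ≤ (2 * N) ^ (4 * s) := Nat.pow_le_pow_right (by omega) (by omega)

theorem sq_two_mul_choose_mul_two_pow_le (hm : 2 ^ 40 ≤ m) (hN : 64 * N ≤ m * Nat.log 2 m)
    (hs : 1 ≤ s) (hsN : s ≤ N) : (2 * N * N.choose s * 2 ^ s) ^ 2 ≤ (s + 1) ^ m := by
  set ℓ := Nat.log 2 m
  have hℓ : 40 ≤ ℓ := Nat.le_log_of_pow_le one_lt_two hm
  have hm_lo : 2 ^ ℓ ≤ m := Nat.pow_log_le_self 2 (by positivity)
  have hm_hi : m < 2 ^ (ℓ + 1) := Nat.lt_pow_succ_log_self one_lt_two m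
  set r := ℓ / 8
  rcases le_or_gt (2 ^ r) (s + 1) with hlarge | hsmall
  · have hNr : 6 * N + 2 ≤ r * m := by
      have h₁ : m * ℓ ≤ m * (8 * r + 7) := Nat.mul_le_mul_left m (by omega)
      have h₂ : m * 5 ≤ m * r := Nat.mul_le_mul_left m (by omega)
      nlinarith
    calc (2 * N * N.choose s * 2 ^ s) ^ 2 ≤ 2 ^ (6 * N + 2) :=
          sq_two_mul_choose_mul_two_pow_le_two_pow hsN
      _ ≤ 2 ^ (r * m) := Nat.pow_le_pow_right two_pos hNr
      _ = (2 ^ r) ^ m := pow_mul 2 r m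
      _ ≤ (s + 1) ^ m := by gcongr
  · have hsℓ : 16 * s * ℓ ≤ m := by
      have h₁ : ℓ < 2 ^ (ℓ / 2 + 1) := by
        have := @Nat.lt_two_pow_self (ℓ / 2); rw [pow_succ]; omega
      calc 16 * s * ℓ ≤ 2 ^ 4 * 2 ^ r * 2 ^ (ℓ / 2 + 1) := by gcongr <;> omega
        _ = 2 ^ (4 + r + (ℓ / 2 + 1)) := by rw [← pow_add, ← pow_add]
        _ ≤ 2 ^ ℓ := Nat.pow_le_pow_right two_pos (by omega)
        _ ≤ m := hm_lo
    have h2N : 2 * N ≤ m ^ 2 := by nlinarith [Nat.log_le_self 2 m]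
    calc (2 * N * N.choose s * 2 ^ s) ^ 2 ≤ (2 * N) ^ (4 * s) :=
          sq_two_mul_choose_mul_two_pow_le_pow hs
      _ ≤ (m ^ 2) ^ (4 * s) := by gcongr
      _ = m ^ (8 * s) := by rw [← pow_mul]; ring_nf
      _ ≤ (2 ^ (ℓ + 1)) ^ (8 * s) := by gcongr
      _ = 2 ^ ((ℓ + 1) * (8 * s)) := (pow_mul 2 _ _).symm
      _ ≤ 2 ^ m := Nat.pow_le_pow_right two_pos (by nlinarith)
      _ ≤ (s + 1) ^ m := by gcongr; omega

theorem two_mul_mul_choose_mul_pow_le (hm : 2 ^ 40 ≤ m) (hN : 64 * N ≤ m * Nat.log 2 m)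
    (hs : 1 ≤ s) (hsN : s ≤ N) :
    2 * N * (N.choose s * 2 ^ s * (s.choose (s / 2) * 2 ^ (N - s)) ^ m) ≤ 2 ^ (N * m) := by
  obtain ⟨t, rfl⟩ : ∃ t, N = s + t := ⟨N - s, by omega⟩
  rw [← Nat.pow_le_pow_iff_left two_ne_zero, Nat.add_sub_cancel_left]
  calc (2 * (s + t) * ((s + t).choose s * 2 ^ s * (s.choose (s / 2) * 2 ^ t) ^ m)) ^ 2
      = (2 * (s + t) * (s + t).choose s * 2 ^ s) ^ 2 * (s.choose (s / 2) ^ 2) ^ m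
          * (2 ^ t) ^ (2 * m) := by ring
    _ ≤ (s + 1) ^ m * (s.choose (s / 2) ^ 2) ^ m * (2 ^ t) ^ (2 * m) := by
        exact Nat.mul_le_mul_right _ <| Nat.mul_le_mul_right _ <|
          sq_two_mul_choose_mul_two_pow_le hm hN hs hsN
    _ = (s.choose (s / 2) ^ 2 * (s + 1)) ^ m * (2 ^ t) ^ (2 * m) := by rw [mul_pow]; ring
    _ ≤ (4 ^ s) ^ m * (2 ^ t) ^ (2 * m) := by gcongr; exact Nat.choose_half_sq_mul_succ_le s
    _ = (2 ^ ((s + t) * m)) ^ 2 := by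
        rw [show (4 : ℕ) = 2 ^ 2 by norm_num, ← pow_mul, ← pow_mul, ← pow_mul, ← pow_mul,
          ← pow_add]
        ring_nf

theorem sum_choose_mul_pow_lt (hm : 2 ^ 40 ≤ m) (hN : 64 * N ≤ m * Nat.log 2 m) :
    ∑ s ∈ Icc 1 N, N.choose s * 2 ^ s * (s.choose (s / 2) * 2 ^ (N - s)) ^ m < 2 ^ (N * m) := by
  obtain rfl | hN₀ := N.eq_zero_or_pos
  · simp
  have h : N * (2 * ∑ s ∈ Icc 1 N, N.choose s * 2 ^ s * (s.choose (s / 2) * 2 ^ (N - s)) ^ m)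
      ≤ N * 2 ^ (N * m) := by
    calc _ = ∑ s ∈ Icc 1 N,
          2 * N * (N.choose s * 2 ^ s * (s.choose (s / 2) * 2 ^ (N - s)) ^ m) := by
          rw [mul_sum, mul_sum]
          exact sum_congr rfl fun _ _ ↦ by ring
      _ ≤ ∑ _s ∈ Icc 1 N, 2 ^ (N * m) := sum_le_sum fun s hs ↦
          two_mul_mul_choose_mul_pow_le hm hN (mem_Icc.mp hs).1 (mem_Icc.mp hs).2
      _ = N * 2 ^ (N * m) := by simp
  have := Nat.le_of_mul_le_mul_left h hN₀
  have := Nat.one_le_two_pow (n := N * m)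
  omega

end Estimates

theorem exists_zero_one_isDissociatedFamily {ι : Type*} [Fintype ι] [DecidableEq ι]
    (hm : 2 ^ 40 ≤ Fintype.card ι) :
    ∃ v : Fin (Fintype.card ι * Nat.log 2 (Fintype.card ι) / 64) → ι → ℤ,
      (∀ i j, v i j = 0 ∨ v i j = 1) ∧ IsDissociatedFamily v :=
  exists_zero_one_isDissociatedFamily_of_sum_lt _ (sum_choose_mul_pow_lt hm (Nat.mul_div_le _ _))

theorem Real.logb_two_le_three_mul_sqrt {x : ℝ} (hx : 0 < x) : Real.logb 2 x ≤ 3 * √x := by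
  have hlog : Real.log x ≤ 2 * √x := by
    have := Real.log_le_sub_one_of_pos (Real.sqrt_pos.mpr hx)
    rw [Real.log_sqrt hx.le] at this
    linarith
  have hsqrt := Real.sqrt_nonneg x
  rw [Real.logb, div_le_iff₀ (Real.log_pos one_lt_two)]
  nlinarith [Real.log_two_gt_d9]

theorem Real.logb_two_lt_natLog_add_one (n : ℕ) : Real.logb 2 n < Nat.log 2 n + 1 := by
  have := Nat.lt_floor_add_one (Real.logb 2 n)
  rwa [show (2 : ℝ) = (2 : ℕ) by norm_num, Real.natFloor_logb_natCast] at this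

theorem natCast_mul_logb_le_of_lt_mul_self {m n : ℕ} (hn : 0 < n) (hnm : n < m * m) :
    (m : ℝ) * Real.logb 2 n ≤ 128 * (m * Nat.log 2 m / 64 : ℕ) + 126 + 2 * m := by
  have hm₀ : (0 : ℝ) < m := by
    exact_mod_cast Nat.pos_of_ne_zero fun h ↦ by simp [h] at hnm
  have hlog_n : Real.logb 2 n ≤ 2 * Real.logb 2 m := by
    rw [two_mul, ← Real.logb_mul hm₀.ne' hm₀.ne']
    exact Real.logb_le_logb_of_le one_lt_two (by exact_mod_cast hn) (by exact_mod_cast hnm.le)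
  have hlog_m := Real.logb_two_lt_natLog_add_one m
  have hdiv : (m * Nat.log 2 m : ℝ) ≤ 64 * (m * Nat.log 2 m / 64 : ℕ) + 63 := by
    have := Nat.lt_div_mul_add (a := m * Nat.log 2 m) (b := 64) (by norm_num)
    exact_mod_cast (show m * Nat.log 2 m ≤ 64 * (m * Nat.log 2 m / 64) + 63 by omega)
  calc (m : ℝ) * Real.logb 2 n ≤ 2 * (m * Real.logb 2 m) := by nlinarith
    _ ≤ 2 * (m * Nat.log 2 m + m) := by nlinarith
    _ ≤ _ := by linarith

theorem IsKDissociated.card_mul_natLog_div_le_addDim_cube {G : Type*} [AddCommGroup G]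
    [DecidableEq G] {k : ℕ} {Λ : Finset G} (hΛ : IsKDissociated k Λ) (hm : 2 ^ 40 ≤ Λ.card)
    (hk : Λ.card * Real.logb 2 Λ.card ≤ k) :
    Λ.card * Nat.log 2 Λ.card / 64 ≤ addDim 1 (cube Λ) := by
  have hNk : Λ.card * Nat.log 2 Λ.card / 64 ≤ k := by
    have : (Λ.card * Nat.log 2 Λ.card : ℝ) ≤ k :=
      (mul_le_mul_of_nonneg_left (Real.natLog_le_logb _ _) (by positivity)).trans hk
    exact (Nat.div_le_self _ _).trans (by exact_mod_cast this)
  obtain ⟨v, hv01, hv⟩ := exists_zero_one_isDissociatedFamily (ι := Λ) (by simpa using hm)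
  simpa using hΛ.card_le_addDim_cube hv01 hv (by simpa using hNk)

theorem IsKDissociated.card_mul_logb_le {G : Type*} [AddCommGroup G] [DecidableEq G]
    {k n : ℕ} {Λ : Finset G} (hΛ : IsKDissociated k Λ) (hn : 1 ≤ n) (hΛn : Λ.card ≤ n)
    (hk : n * Real.logb 2 n ≤ k) :
    (Λ.card : ℝ) * Real.logb 2 n ≤ 128 * addDim 1 (cube Λ) + 2 ^ 42 * n := by
  set m := Λ.card
  have hn₀ : (0 : ℝ) < n := by exact_mod_cast hn
  have hmn : (m : ℝ) ≤ n := by exact_mod_cast hΛn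
  have hd₀ := Nat.cast_nonneg (α := ℝ) (addDim 1 (cube Λ))
  by_cases hsmall : (m : ℝ) ≤ 2 ^ 40 * √n
  · have hL := Real.logb_two_le_three_mul_sqrt hn₀
    calc (m : ℝ) * Real.logb 2 n ≤ 2 ^ 40 * √n * (3 * √n) := by
          gcongr; exact Real.logb_nonneg one_lt_two (by exact_mod_cast hn)
      _ = 3 * 2 ^ 40 * n := by rw [mul_mul_mul_comm, Real.mul_self_sqrt hn₀.le]; ring
      _ ≤ _ := by nlinarith
  have hsqrt : 1 ≤ √(n : ℝ) := Real.one_le_sqrt.mpr (by exact_mod_cast hn)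
  have hm : 2 ^ 40 ≤ m := by exact_mod_cast (show (2 : ℝ) ^ 40 ≤ m by nlinarith)
  have hnm : n < m * m := by
    have : (n : ℝ) < m * m := by nlinarith [Real.mul_self_sqrt hn₀.le]
    exact_mod_cast this
  have hm₀ : (0 : ℝ) < m := by positivity
  have hlogm : Real.logb 2 m ≤ Real.logb 2 n := Real.logb_le_logb_of_le one_lt_two hm₀ hmn
  have hNd := hΛ.card_mul_natLog_div_le_addDim_cube hm <|
    (mul_le_mul hmn hlogm (Real.logb_nonneg one_lt_two (by exact_mod_cast hm₀)) hn₀.le).trans hk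
  have := natCast_mul_logb_le_of_lt_mul_self (by omega) hnm
  have : ((m * Nat.log 2 m / 64 : ℕ) : ℝ) ≤ addDim 1 (cube Λ) := by exact_mod_cast hNd
  nlinarith

theorem stmt6 :
    ∃ C : ℝ, 0 < C ∧
      ∀ (G : Type u) [AddCommGroup G] [DecidableEq G] (A : Finset G),
        4 ≤ addDim 1 A →
        ∀ k : ℕ, k = ⌈(addDim 1 A : ℝ) * Real.logb 2 (addDim 1 A)⌉₊ →
        ∀ Λk : Finset G, Λk ⊆ A → IsKDissociated k Λk → Λk.card = addDim k A →
        ∀ K : ℝ, 1 ≤ K →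
          (((addDim 1 (cube Λk) : ℝ) ≤ K * addDim 1 A →
              (addDim k A : ℝ) ≤ C * K * addDim 1 A / Real.logb 2 (addDim 1 A)) ∧
           ((addDim k A : ℝ) ≤ K * addDim 1 A / Real.logb 2 (addDim 1 A) →
              (addDim 1 (cube Λk) : ℝ) ≤ C * K * addDim 1 A)) := by
  refine ⟨2 ^ 50, by norm_num, fun G _ _ A hA k hk Λ hΛA hΛ hcard K hK ↦ ?_⟩
  set n := addDim 1 A
  have hn : (4 : ℝ) ≤ n := by exact_mod_cast hA
  have hL : 2 ≤ Real.logb 2 n := by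
    rw [Real.le_logb_iff_rpow_le one_lt_two (by positivity)]
    norm_num [hn]
  have hk_ge : n * Real.logb 2 n ≤ k := hk ▸ Nat.le_ceil _
  have hmn : Λ.card ≤ n :=
    le_addDim hΛA (hΛ.mono (Nat.one_le_cast.mp (by nlinarith : (1 : ℝ) ≤ k)))
  have hcube_ge := hΛ.card_mul_logb_le (by omega) hmn hk_ge
  have hlogm : Real.logb 2 Λ.card ≤ Real.logb 2 n := by
    rcases Λ.card.eq_zero_or_pos with h | h
    · rw [h, Nat.cast_zero, Real.logb_zero]
      linarith
    · exact Real.logb_le_logb_of_le one_lt_two (by exact_mod_cast h) (by exact_mod_cast hmn)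
  have hcube_le := addDim_cube_le Λ
  rw [hcard] at hcube_ge hcube_le hlogm
  have hd₀ := Nat.cast_nonneg (α := ℝ) (addDim 1 (cube Λ))
  have hm₀ := Nat.cast_nonneg (α := ℝ) (addDim k A)
  constructor
  · intro hdK
    rw [le_div_iff₀ (by linarith)]
    nlinarith
  · intro hmK
    rw [le_div_iff₀ (by linarith)] at hmK
    nlinarith
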